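/- arXiv:1004.2392 — 2 statements merged into one kernel-verified Lean document; each statement's English description precedes it below -/
import Mathlib

section
/- Let D be an n×N complex matrix and let D_{L1,L2} be the (nL1)×(NL2) block matrix formed by tiling L1×L2 copies of D. Then for every positive integer p, tr_norm(((1/(N L2)) D_{L1,L2} D_{L1,L2}^H)^p) = L1^{p-1} · tr_norm(((1/N) D D^H)^p), where tr_norm denotes the normalized trace (trace divided by matrix dimension). -/
/-!
Tiles multiply like the matrices they tile, up to the number of blocks summed over:
`tile A * tile B = card k • tile (A * B)`. Hence `(N L2)⁻¹ • Dt Dtᴴ` is the `L1 × L1` tiling of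
`N⁻¹ • D Dᴴ`, its `p`-th power is `L1^(p-1)` times the tiling of `(N⁻¹ • D Dᴴ)^p`, and tracing a
square tiling multiplies the trace by `L1`, which the normalisation by `n L1` absorbs.
-/

open Matrix

def Matrix.tile (l l' : Type*) {m n α : Type*} (A : Matrix m n α) : Matrix (l × m) (l' × n) α :=
  Matrix.of fun a b => A a.2 b.2

namespace Matrix

variable {l l' k m n o α : Type*}

@[simp]
theorem tile_apply (A : Matrix m n α) (a : l × m) (b : l' × n) : tile l l' A a b = A a.2 b.2 :=
  rfl

theorem tile_mul_tile [Fintype k] [Fintype n] [NonUnitalNonAssocSemiring α]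
    (A : Matrix m n α) (B : Matrix n o α) :
    tile l k A * tile k l' B = Fintype.card k • tile l l' (A * B) := by
  ext a b
  simp [mul_apply, Fintype.sum_prod_type]

theorem conjTranspose_tile [Star α] (A : Matrix m n α) : (tile l l' A)ᴴ = tile l' l Aᴴ :=
  rfl

theorem smul_tile {R : Type*} [SMul R α] (c : R) (A : Matrix m n α) :
    c • tile l l' A = tile l l' (c • A) :=
  rfl

theorem tile_pow [Fintype l] [Fintype m] [DecidableEq l] [DecidableEq m] [Semiring α]
    (A : Matrix m m α) (p : ℕ) :
    tile l l A ^ (p + 1) = (Fintype.card l ^ p) • tile l l (A ^ (p + 1)) := by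
  induction p with
  | zero => simp
  | succ p ih =>
    rw [pow_succ, ih, smul_mul, tile_mul_tile, smul_smul, ← pow_succ, ← pow_succ]

theorem trace_tile [Fintype l] [Fintype m] [AddCommMonoid α] (A : Matrix m m α) :
    trace (tile l l A) = Fintype.card l • trace A := by
  simp [trace, Fintype.sum_prod_type]

end Matrix

theorem stmt_0_general (n N L1 L2 : ℕ) (hL1 : 0 < L1) (hL2 : 0 < L2)
    (D : Matrix (Fin n) (Fin N) ℂ) (p : ℕ) (hp : 0 < p)
    (Dt : Matrix (Fin L1 × Fin n) (Fin L2 × Fin N) ℂ)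
    (hDt : ∀ a b, Dt a b = D a.2 b.2) :
    (1 / (n * L1 : ℂ)) * Matrix.trace ((((N * L2 : ℂ))⁻¹ • (Dt * Dt.conjTranspose)) ^ p)
      = (L1 : ℂ) ^ (p - 1) *
        ((1 / (n : ℂ)) * Matrix.trace ((((N : ℂ))⁻¹ • (D * D.conjTranspose)) ^ p)) := by
  obtain ⟨q, rfl⟩ := Nat.exists_eq_add_of_lt hp
  have hL1c : (L1 : ℂ) ≠ 0 := Nat.cast_ne_zero.mpr hL1.ne'
  have hL2c : (L2 : ℂ) ≠ 0 := Nat.cast_ne_zero.mpr hL2.ne'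
  have hDt_tile : Dt = tile (Fin L1) (Fin L2) D := ext hDt
  have hgram : ((N * L2 : ℂ))⁻¹ • (Dt * Dtᴴ) = tile (Fin L1) (Fin L1) ((N : ℂ)⁻¹ • (D * Dᴴ)) := by
    rw [hDt_tile, conjTranspose_tile, tile_mul_tile, Fintype.card_fin, ← Nat.cast_smul_eq_nsmul ℂ,
      smul_smul, mul_inv, inv_mul_cancel_right₀ hL2c, smul_tile]
  rw [hgram, zero_add, tile_pow, trace_smul, trace_tile, Fintype.card_fin, nsmul_eq_mul,
    nsmul_eq_mul, Nat.cast_pow, Nat.add_sub_cancel]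
  linear_combination (L1 : ℂ) ^ q * (n : ℂ)⁻¹ * trace (((N : ℂ)⁻¹ • (D * Dᴴ)) ^ (q + 1))
    * mul_inv_cancel₀ hL1c

/-- Stacking moment identity: the normalized-trace moments of the compound
matrix `D_{L1,L2}` (the `L1 × L2` block tiling of `D`) are `L1^(p-1)` times
those of `D`. -/
theorem stmt_0 (n N L1 L2 : ℕ) (hn : 0 < n) (hN : 0 < N) (hL1 : 0 < L1) (hL2 : 0 < L2)
    (D : Matrix (Fin n) (Fin N) ℂ) (p : ℕ) (hp : 0 < p)
    (Dt : Matrix (Fin L1 × Fin n) (Fin L2 × Fin N) ℂ)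
    (hDt : ∀ a b, Dt a b = D a.2 b.2) :
    (1 / (n * L1 : ℂ)) * Matrix.trace ((((N * L2 : ℂ))⁻¹ • (Dt * Dt.conjTranspose)) ^ p)
      = (L1 : ℂ) ^ (p - 1) *
        ((1 / (n : ℂ)) * Matrix.trace ((((N : ℂ))⁻¹ • (D * D.conjTranspose)) ^ p)) :=
  stmt_0_general n N L1 L2 hL1 hL2 D p hp Dt hDt
end

section
/- Let X be an n×N standard complex Gaussian matrix, D a fixed n×N matrix, Y = D + X, and define the estimator T = tr_norm((1/N) Y Y^H) − 1 of D_1 = tr_norm((1/N) D D^H). Then Var(T) = (2 D_1 + 1)/(nN). -/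
open MeasureTheory ProbabilityTheory Matrix

/-- `Z` is a standard complex Gaussian random variable: its real and imaginary
parts are independent, each Gaussian with mean `0` and variance `1/2`. -/
def IsStdComplexGaussianEntry {Ω : Type*} [MeasurableSpace Ω] (μ : Measure Ω)
    (Z : Ω → ℂ) : Prop :=
  IndepFun (fun ω => (Z ω).re) (fun ω => (Z ω).im) μ ∧
  μ.map (fun ω => (Z ω).re) = gaussianReal 0 (1 / 2) ∧
  μ.map (fun ω => (Z ω).im) = gaussianReal 0 (1 / 2)

/-- `X` is a standard complex Gaussian random matrix: its entries are jointly
independent standard complex Gaussian random variables (mean zero, unit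
variance). -/
def IsStdComplexGaussian {Ω : Type*} [MeasurableSpace Ω] (μ : Measure Ω)
    {I J : Type*} [Fintype I] [Fintype J] (X : Ω → Matrix I J ℂ) : Prop :=
  iIndepFun (fun (q : I × J) ω => X ω q.1 q.2) μ ∧
  ∀ i j, IsStdComplexGaussianEntry μ (fun ω => X ω i j)

/-! The normalized trace of `Y Yᴴ / N` is `(nN)⁻¹ ∑ |D_ij + X_ij|²`, a sum of independent terms.
Writing `D_ij = a + b i`, each term is `(a + U)² + (b + V)²` with `U`, `V` independent `N(0, 1/2)`.
For `W ~ N(m, v)` one has `Var(W²) = E W⁴ - (E W²)² = 4 m² v + 2 v²`, the moments being the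
derivatives at `0` of the mgf `exp (m t + v t² / 2)`. Hence each term has variance `2 |D_ij|² + 1`,
and the variance of `T` is `(nN)⁻² ∑ (2 |D_ij|² + 1) = (2 D₁ + 1) / (nN)`. -/

open scoped NNReal

namespace ProbabilityTheory

section GaussianMoments

open Polynomial

variable {m : ℝ} {v : ℝ≥0}

/-- Differentiating `P (m + v t) * exp (m t + v t² / 2)` in `t` replaces `P` by `v P' + X P`, so
`∫ x ^ k ∂gaussianReal m v` is the `k`-th iterate of this operation on `1`, evaluated at `m`. -/
noncomputable def gaussianMomentPoly (v : ℝ≥0) (k : ℕ) : ℝ[X] :=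
  (fun P => C (v : ℝ) * derivative P + X * P)^[k] 1

lemma gaussianMomentPoly_zero : gaussianMomentPoly v 0 = 1 := rfl

lemma gaussianMomentPoly_succ (k : ℕ) :
    gaussianMomentPoly v (k + 1) =
      C (v : ℝ) * derivative (gaussianMomentPoly v k) + X * gaussianMomentPoly v k :=
  Function.iterate_succ_apply' _ _ _

lemma hasDerivAt_eval_mul_mgf_gaussianReal (P : ℝ[X]) (t : ℝ) :
    HasDerivAt (fun t => P.eval (m + v * t) * mgf id (gaussianReal m v) t)
      ((C (v : ℝ) * derivative P + X * P).eval (m + v * t) * mgf id (gaussianReal m v) t) t := by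
  rw [mgf_id_gaussianReal]
  have hlinear : HasDerivAt (fun t : ℝ => m + v * t) v t := by
    simpa using ((hasDerivAt_id t).const_mul (v : ℝ)).const_add m
  have hexponent : HasDerivAt (fun t : ℝ => m * t + v * t ^ 2 / 2) (m + v * t) t :=
    (((hasDerivAt_id t).const_mul m).add
      (((hasDerivAt_pow 2 t).const_mul (v : ℝ)).div_const 2)).congr_deriv
        (by simp only [mul_one, Nat.cast_ofNat, Nat.add_one_sub_one, pow_one]; ring)
  refine (((P.hasDerivAt (m + v * t)).comp t hlinear).mul hexponent.exp).congr_deriv ?_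
  simp only [Function.comp_apply, eval_add, eval_mul, eval_C, eval_X]
  ring

lemma iteratedDeriv_mgf_gaussianReal (k : ℕ) :
    iteratedDeriv k (mgf id (gaussianReal m v)) =
      fun t => (gaussianMomentPoly v k).eval (m + v * t) * mgf id (gaussianReal m v) t := by
  induction k with
  | zero => simp [gaussianMomentPoly_zero]
  | succ k ih =>
    rw [iteratedDeriv_succ, ih, gaussianMomentPoly_succ]
    exact funext fun t => (hasDerivAt_eval_mul_mgf_gaussianReal _ t).deriv

lemma integral_pow_gaussianReal (k : ℕ) :
    ∫ x, x ^ k ∂gaussianReal m v = (gaussianMomentPoly v k).eval m := by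
  have h := iteratedDeriv_mgf_zero (X := id) (μ := gaussianReal m v)
    (by simp [integrableExpSet_id_gaussianReal]) k
  rw [iteratedDeriv_mgf_gaussianReal] at h
  simpa [mgf_id_gaussianReal] using h.symm

lemma integral_sq_gaussianReal : ∫ x, x ^ 2 ∂gaussianReal m v = m ^ 2 + v := by
  simp only [integral_pow_gaussianReal, gaussianMomentPoly_succ, gaussianMomentPoly_zero,
    derivative_one, mul_zero, mul_one, zero_add, derivative_X, eval_add, eval_C, eval_mul, eval_X]
  ring

lemma integral_pow_four_gaussianReal :
    ∫ x, x ^ 4 ∂gaussianReal m v = m ^ 4 + 6 * m ^ 2 * v + 3 * v ^ 2 := by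
  simp only [integral_pow_gaussianReal, gaussianMomentPoly_succ, gaussianMomentPoly_zero,
    derivative_one, mul_zero, mul_one, zero_add, derivative_X, derivative_add, derivative_C,
    derivative_mul, one_mul, zero_mul, eval_add, eval_mul, eval_C, eval_one, eval_X]
  ring

end GaussianMoments

variable {m : ℝ} {v : ℝ≥0}

lemma memLp_sq_gaussianReal : MemLp (fun x : ℝ => x ^ 2) 2 (gaussianReal m v) := by
  rw [memLp_two_iff_integrable_sq (by fun_prop)]
  refine ((memLp_id_gaussianReal 4).integrable_norm_pow four_ne_zero).congr
    (.of_forall fun x => ?_)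
  simp [← pow_mul, (show Even 4 by decide).pow_abs]

lemma variance_sq_gaussianReal :
    Var[fun x => x ^ 2; gaussianReal m v] = 4 * m ^ 2 * v + 2 * v ^ 2 := by
  rw [variance_eq_sub memLp_sq_gaussianReal]
  simp only [Pi.pow_apply, ← pow_mul]
  rw [integral_pow_four_gaussianReal, integral_sq_gaussianReal]
  ring

variable {Ω : Type*} [MeasurableSpace Ω] {μ : Measure Ω}

lemma memLp_sq_of_map_eq_gaussianReal {W : Ω → ℝ} (hW : μ.map W = gaussianReal m v) :
    MemLp (fun ω => W ω ^ 2) 2 μ := by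
  have hWm : AEMeasurable W μ := aemeasurable_of_map_neZero (by rw [hW]; infer_instance)
  have h := memLp_sq_gaussianReal (m := m) (v := v)
  rw [← hW] at h
  exact (memLp_map_measure_iff (by fun_prop) hWm).1 h

lemma variance_sq_of_map_eq_gaussianReal {W : Ω → ℝ} (hW : μ.map W = gaussianReal m v) :
    Var[fun ω => W ω ^ 2; μ] = 4 * m ^ 2 * v + 2 * v ^ 2 := by
  have hWm : AEMeasurable W μ := aemeasurable_of_map_neZero (by rw [hW]; infer_instance)
  rw [← variance_sq_gaussianReal (m := m) (v := v), ← hW, variance_map (by fun_prop) hWm]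
  rfl

lemma map_const_add_eq_gaussianReal {W : Ω → ℝ} (hW : μ.map W = gaussianReal 0 v) (a : ℝ) :
    μ.map (fun ω => a + W ω) = gaussianReal a v := by
  have hWm : AEMeasurable W μ := aemeasurable_of_map_neZero (by rw [hW]; infer_instance)
  change μ.map ((a + ·) ∘ W) = _
  rw [← AEMeasurable.map_map_of_aemeasurable (by fun_prop) hWm, hW, gaussianReal_map_const_add,
    zero_add]

end ProbabilityTheory

lemma Complex.normSq_eq_re_sq_add_im_sq (z : ℂ) : Complex.normSq z = z.re ^ 2 + z.im ^ 2 := by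
  rw [Complex.normSq_apply]
  ring

namespace IsStdComplexGaussianEntry

variable {Ω : Type*} [MeasurableSpace Ω] {μ : Measure Ω} {Z : Ω → ℂ}

lemma memLp_normSq_const_add (hZ : IsStdComplexGaussianEntry μ Z) (c : ℂ) :
    MemLp (fun ω => Complex.normSq (c + Z ω)) 2 μ := by
  simp only [Complex.normSq_eq_re_sq_add_im_sq, Complex.add_re, Complex.add_im]
  exact (memLp_sq_of_map_eq_gaussianReal (map_const_add_eq_gaussianReal hZ.2.1 c.re)).add
    (memLp_sq_of_map_eq_gaussianReal (map_const_add_eq_gaussianReal hZ.2.2 c.im))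

lemma variance_normSq_const_add [IsProbabilityMeasure μ] (hZ : IsStdComplexGaussianEntry μ Z)
    (c : ℂ) : Var[fun ω => Complex.normSq (c + Z ω); μ] = 2 * Complex.normSq c + 1 := by
  obtain ⟨hindep, hre, him⟩ := hZ
  have hre' := map_const_add_eq_gaussianReal hre c.re
  have him' := map_const_add_eq_gaussianReal him c.im
  have hindep' : IndepFun (fun ω => (c.re + (Z ω).re) ^ 2) (fun ω => (c.im + (Z ω).im) ^ 2) μ :=
    hindep.comp (φ := fun x => (c.re + x) ^ 2) (ψ := fun y => (c.im + y) ^ 2)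
      (by fun_prop) (by fun_prop)
  simp only [Complex.normSq_eq_re_sq_add_im_sq, Complex.add_re, Complex.add_im]
  rw [hindep'.variance_fun_add (memLp_sq_of_map_eq_gaussianReal hre')
    (memLp_sq_of_map_eq_gaussianReal him'), variance_sq_of_map_eq_gaussianReal hre',
    variance_sq_of_map_eq_gaussianReal him']
  push_cast
  ring

end IsStdComplexGaussianEntry

lemma Matrix.trace_mul_conjTranspose_self {ι κ : Type*} [Fintype ι] [Fintype κ]
    (M : Matrix ι κ ℂ) : (M * Mᴴ).trace = ∑ p : ι × κ, (Complex.normSq (M p.1 p.2) : ℂ) := by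
  simp [Matrix.trace, Matrix.mul_apply, Fintype.sum_prod_type, Complex.mul_conj]

lemma re_normalized_trace_mul_conjTranspose_self {n N : ℕ} (M : Matrix (Fin n) (Fin N) ℂ) :
    ((1 / (n : ℂ)) * Matrix.trace (((N : ℂ))⁻¹ • (M * Mᴴ))).re
      = ((n : ℝ) * N)⁻¹ * ∑ p : Fin n × Fin N, Complex.normSq (M p.1 p.2) := by
  rw [Matrix.trace_smul, Matrix.trace_mul_conjTranspose_self, ← Complex.ofReal_re (_ * _)]
  congr 1
  push_cast
  ring

theorem stmt_12_general {Ω : Type*} [MeasurableSpace Ω] (μ : Measure Ω) [IsProbabilityMeasure μ]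
    (n N : ℕ)
    (D : Matrix (Fin n) (Fin N) ℂ) (X : Ω → Matrix (Fin n) (Fin N) ℂ)
    (hX : IsStdComplexGaussian μ X)
    (Y : Ω → Matrix (Fin n) (Fin N) ℂ) (hY : ∀ ω, Y ω = D + X ω)
    (T : Ω → ℝ)
    (hT : T = fun ω => ((1 / (n : ℂ)) * Matrix.trace (((N : ℂ))⁻¹ • (Y ω * (Y ω)ᴴ))).re - 1)
    (D1 : ℝ) (hD1 : D1 = ((1 / (n : ℂ)) * Matrix.trace (((N : ℂ))⁻¹ • (D * Dᴴ))).re) :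
    variance T μ = (2 * D1 + 1) / (n * N) := by
  obtain ⟨hindep, hentry⟩ := hX
  set f : Fin n × Fin N → Ω → ℝ := fun p ω => Complex.normSq (D p.1 p.2 + X ω p.1 p.2)
  have hmem (p : Fin n × Fin N) : MemLp (f p) 2 μ := (hentry p.1 p.2).memLp_normSq_const_add _
  have hf_indep : iIndepFun f μ :=
    hindep.comp (fun p z => Complex.normSq (D p.1 p.2 + z)) fun _ => by fun_prop
  have hsum : MemLp (∑ p, f p) 2 μ := memLp_finsetSum' _ fun p _ => hmem p
  have hT' : T = fun ω => ((n : ℝ) * N)⁻¹ * (∑ p, f p) ω - 1 := by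
    simp only [hT, hY, re_normalized_trace_mul_conjTranspose_self, Matrix.add_apply,
      Finset.sum_apply, f]
  calc variance T μ = ((n : ℝ) * N)⁻¹ ^ 2 * Var[∑ p, f p; μ] := by
        rw [hT', variance_sub_const (hsum.1.const_mul _), variance_const_mul]
    _ = ((n : ℝ) * N)⁻¹ ^ 2 * ∑ p : Fin n × Fin N, (2 * Complex.normSq (D p.1 p.2) + 1) := by
        rw [IndepFun.variance_sum (fun p _ => hmem p) fun p _ q _ hpq => hf_indep.indepFun hpq]
        simp only [f, (hentry _ _).variance_normSq_const_add]
    _ = (2 * D1 + 1) / (n * N) := by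
        rw [hD1, re_normalized_trace_mul_conjTranspose_self, Finset.sum_add_distrib,
          ← Finset.mul_sum]
        simp only [Finset.sum_const, Finset.card_univ, Fintype.card_prod, Fintype.card_fin,
          nsmul_eq_mul, mul_one, Nat.cast_mul]
        generalize (n : ℝ) * N = c
        rcases eq_or_ne c 0 with rfl | hc
        · simp
        · field_simp

/-- For `Y = D + X` with `X` standard complex Gaussian, the unbiased estimator
`T = tr_norm((1/N) Y Yᴴ) - 1` of `D₁ = tr_norm((1/N) D Dᴴ)` has variance
`(2 D₁ + 1)/(nN)`. -/
theorem stmt_12 {Ω : Type*} [MeasurableSpace Ω] (μ : Measure Ω) [IsProbabilityMeasure μ]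
    (n N : ℕ) (hn : 0 < n) (hN : 0 < N)
    (D : Matrix (Fin n) (Fin N) ℂ) (X : Ω → Matrix (Fin n) (Fin N) ℂ)
    (hX : IsStdComplexGaussian μ X)
    (Y : Ω → Matrix (Fin n) (Fin N) ℂ) (hY : ∀ ω, Y ω = D + X ω)
    (T : Ω → ℝ)
    (hT : T = fun ω => ((1 / (n : ℂ)) * Matrix.trace (((N : ℂ))⁻¹ • (Y ω * (Y ω)ᴴ))).re - 1)
    (D1 : ℝ) (hD1 : D1 = ((1 / (n : ℂ)) * Matrix.trace (((N : ℂ))⁻¹ • (D * Dᴴ))).re) :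
    variance T μ = (2 * D1 + 1) / (n * N) :=
  stmt_12_general μ n N D X hX Y hY T hT D1 hD1
end
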